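/- arXiv:quant-ph/0610030 — 4 statements merged into one kernel-verified Lean document; each statement's English description precedes it below -/
import Mathlib

section
/- (Theorem 1: G-twirling decomposes as decoherence-full on gauge subsystems and identity on multiplicity subsystems.) Define the G-twirling operation 𝒢[A] = |G|⁻¹ ∑_{g∈G} T(g) A T(g)† on linear operators A on H. Then for every linear operator A on H, Φ 𝒢[A] Φ⁻¹ = ⊕_{q∈Q} (I_{M_q}/dim M_q) ⊗ Tr_{M_q}[(Φ A Φ⁻¹)_{qq}], where (Φ A Φ⁻¹)_{qq} = P_q (Φ A Φ⁻¹) P_q is the q-th diagonal block (P_q the orthogonal projection onto the summand M_q ⊗ N_q) and Tr_{M_q} denotes the partial trace over M_q, i.e., the unique linear map on operators on M_q ⊗ N_q satisfying Tr_{M_q}[B ⊗ C] = (Tr B)·C. In particular, all off-diagonal blocks of Φ 𝒢[A] Φ⁻¹ between distinct sectors q ≠ q' vanish. -/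
/-!
Write `(linHom ρ σ).norm f = ∑ g, σ g ∘ f ∘ ρ g⁻¹` for the unnormalized twirl. Conjugated by `Φ`,
the twirl of `A` becomes, block by block, the twirl of the block `M q' ⊗ N q' → M q ⊗ N q` of
`Φ A Φ⁻¹` with respect to `T_{q'} ⊗ 1` and `T_q ⊗ 1`. On an elementary block `B ⊗ C` this twirl
acts on `B` alone, and the twirl of `B` intertwines `T_{q'}` with `T_q`. By Schur's lemma it
vanishes for `q ≠ q'`, and for `q = q'` it is a scalar, equal to `|G| Tr B / dim M_q` by taking
traces. The elementary blocks span all blocks, since the spaces are finite-dimensional.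
-/

open TensorProduct Module

namespace TensorProduct

theorem map_sum_left {R V W V' W' ι : Type*} [CommSemiring R] [AddCommMonoid V] [Module R V]
    [AddCommMonoid W] [Module R W] [AddCommMonoid V'] [Module R V'] [AddCommMonoid W'] [Module R W']
    (s : Finset ι) (f : ι → V →ₗ[R] V') (g : W →ₗ[R] W') :
    map (∑ i ∈ s, f i) g = ∑ i ∈ s, map (f i) g :=
  map_sum ((mapBilinear (RingHom.id R) V W V' W').flip g) f s

variable {k V W V' W' X : Type*} [Field k] [AddCommGroup V] [Module k V] [FiniteDimensional k V]
  [AddCommGroup W] [Module k W] [FiniteDimensional k W]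
  [AddCommGroup V'] [Module k V'] [AddCommGroup W'] [Module k W'] [AddCommGroup X] [Module k X]

theorem ext_map {Λ Λ' : (V ⊗[k] W →ₗ[k] V' ⊗[k] W') →ₗ[k] X}
    (h : ∀ f g, Λ (map f g) = Λ' (map f g)) : Λ = Λ' := by
  ext S
  obtain ⟨t, rfl⟩ := (homTensorHomEquiv k V W V' W').surjective S
  induction t using TensorProduct.induction_on with
  | zero => simp
  | tmul f g => simpa using h f g
  | add s t hs ht => rw [map_add, map_add, map_add, hs, ht]

end TensorProduct

namespace Representation

section CommRing

variable {k G : Type*} [CommRing k] [Group G]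

section

variable {V W : Type*} [AddCommGroup V] [Module k V] [AddCommGroup W] [Module k W]
  (ρ : Representation k G V) (σ : Representation k G W)

theorem trace_linHom_apply (g : G) (f : Module.End k V) :
    LinearMap.trace k V (linHom ρ ρ g f) = LinearMap.trace k V f := by
  rw [linHom_apply, ← Module.End.mul_eq_comp, ← Module.End.mul_eq_comp, LinearMap.trace_mul_comm,
    mul_assoc, ← map_mul, inv_mul_cancel, map_one, mul_one]

variable [Fintype G]

theorem norm_linHom_apply (f : V →ₗ[k] W) : (linHom ρ σ).norm f = ∑ g, σ g ∘ₗ f ∘ₗ ρ g⁻¹ := by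
  simp [norm]

theorem isIntertwiningMap_norm_linHom (f : V →ₗ[k] W) :
    ρ.IsIntertwiningMap σ ((linHom ρ σ).norm f) :=
  (mem_linHom_invariants_iff_isIntertwining _).mp fun g => self_norm_apply (linHom ρ σ) g f

theorem norm_linHom_tprod_trivial_map {V' W' : Type*} [AddCommGroup V'] [Module k V']
    [AddCommGroup W'] [Module k W'] (τ : Representation k G V') (f : V →ₗ[k] V')
    (h : W →ₗ[k] W') :
    (linHom (ρ.tprod (trivial k G W)) (τ.tprod (trivial k G W'))).norm (map f h)
      = map ((linHom ρ τ).norm f) h := by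
  simp only [norm, LinearMap.sum_apply, linHom_apply, tprod_apply, map_sum_left]
  refine Finset.sum_congr rfl fun g _ => ?_
  rw [← map_comp, ← map_comp]
  rfl

end

variable [Fintype G] {H ι : Type*} [Fintype ι] [DecidableEq ι] [AddCommGroup H] [Module k H]
  {V : ι → Type*} [∀ i, AddCommGroup (V i)] [∀ i, Module k (V i)]

theorem norm_linHom_apply_eq_sum_blocks (T : Representation k G H)
    (ρ : ∀ i, Representation k G (V i)) (Φ : H ≃ₗ[k] ∀ i, V i)
    (hΦ : ∀ g x i, Φ (T g x) i = ρ i g (Φ x i)) (A : Module.End k H) (v : ∀ i, V i) (i : ι) :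
    Φ ((linHom T T).norm A (Φ.symm v)) i
      = ∑ j, (linHom (ρ j) (ρ i)).norm (LinearMap.proj i ∘ₗ
          (Φ.toLinearMap ∘ₗ A ∘ₗ Φ.symm.toLinearMap) ∘ₗ LinearMap.single k V j) (v j) := by
  have hΦsymm : ∀ g, T g (Φ.symm v) = Φ.symm fun j => ρ j g (v j) := fun g =>
    Φ.eq_symm_apply.2 <| funext fun j => by rw [hΦ, Φ.apply_symm_apply]
  have hblocks : ∀ w : ∀ j, V j, Φ (A (Φ.symm w)) i
      = ∑ j, Φ (A (Φ.symm (Pi.single j (w j)))) i := fun w => by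
    conv_lhs => rw [← Finset.univ_sum_single w]
    simp only [map_sum, Finset.sum_apply]
  simp only [norm, LinearMap.sum_apply, linHom_apply, map_sum, Finset.sum_apply,
    LinearMap.comp_apply, hΦsymm, hΦ]
  simp only [hblocks (fun j => ρ j _ (v j)), map_sum]
  rw [Finset.sum_comm]
  rfl

end CommRing

section Field

variable {k G V V' : Type*} [Field k] [Group G] [AddCommGroup V] [Module k V]
  [AddCommGroup V'] [Module k V'] (ρ : Representation k G V) (σ : Representation k G V')

theorem isIrreducible_of_forall_submodule [Nontrivial V]
    (h : ∀ U : Submodule k V, (∀ g, ∀ x ∈ U, ρ g x ∈ U) → U = ⊥ ∨ U = ⊤) : ρ.IsIrreducible where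
  exists_pair_ne := ⟨⊥, ⊤, fun he => bot_ne_top (congrArg Subrepresentation.toSubmodule he)⟩
  eq_bot_or_eq_top U := (h U.toSubmodule fun g _ hx => U.apply_mem_toSubmodule g hx).imp
    (fun hU => Subrepresentation.toSubmodule_injective hU)
    (fun hU => Subrepresentation.toSubmodule_injective hU)

theorem IsIrreducible.nontrivial [ρ.IsIrreducible] : Nontrivial V :=
  IsSimpleModule.nontrivial (MonoidAlgebra k G) ρ.asModule

variable [Fintype G]

theorem norm_linHom_eq_zero [ρ.IsIrreducible] [σ.IsIrreducible] [IsEmpty (ρ.Equiv σ)]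
    (f : V →ₗ[k] V') : (linHom ρ σ).norm f = 0 :=
  congrArg IntertwiningMap.toLinearMap <| Subsingleton.elim
    (((linHom ρ σ).norm f).intertwiningMap_of_isIntertwiningMap ρ σ
      (isIntertwiningMap_norm_linHom ρ σ f).isIntertwining) 0

theorem inv_card_smul_norm_linHom_self [IsAlgClosed k] [CharZero k] [FiniteDimensional k V]
    [ρ.IsIrreducible] (f : Module.End k V) :
    (Fintype.card G : k)⁻¹ • (linHom ρ ρ).norm f
      = (finrank k V : k)⁻¹ • LinearMap.trace k V f • LinearMap.id := by
  obtain ⟨c, hc⟩ := IsIrreducible.algebraMap_intertwiningMap_bijective_of_isAlgClosed.2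
    (((linHom ρ ρ).norm f).intertwiningMap_of_isIntertwiningMap ρ ρ
      (isIntertwiningMap_norm_linHom ρ ρ f).isIntertwining)
  have hscalar : (linHom ρ ρ).norm f = c • LinearMap.id :=
    (congrArg IntertwiningMap.toLinearMap hc).symm
  have htrace : (Fintype.card G : k) * LinearMap.trace k V f = c * finrank k V := by
    have := congrArg (LinearMap.trace k V) hscalar
    simp only [norm, LinearMap.sum_apply, map_sum, trace_linHom_apply, map_smul,
      LinearMap.trace_id] at this
    simpa [Finset.card_univ] using this
  have := IsIrreducible.nontrivial ρ
  have hV : (finrank k V : k) ≠ 0 := Nat.cast_ne_zero.2 finrank_pos.ne'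
  have hG : (Fintype.card G : k) ≠ 0 := Nat.cast_ne_zero.2 Fintype.card_ne_zero
  rw [hscalar, smul_smul, smul_smul]
  congr 1
  field_simp
  linear_combination htrace.symm

variable {W W' : Type*} [AddCommGroup W] [Module k W] [AddCommGroup W'] [Module k W']
  [FiniteDimensional k V] [FiniteDimensional k W]

theorem norm_linHom_tprod_trivial_eq_zero [ρ.IsIrreducible] [σ.IsIrreducible]
    [IsEmpty (ρ.Equiv σ)] (S : V ⊗[k] W →ₗ[k] V' ⊗[k] W') :
    (linHom (ρ.tprod (trivial k G W)) (σ.tprod (trivial k G W'))).norm S = 0 := by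
  suffices (linHom (ρ.tprod (trivial k G W)) (σ.tprod (trivial k G W'))).norm = 0 by
    rw [this, LinearMap.zero_apply]
  refine ext_map fun f h => ?_
  rw [norm_linHom_tprod_trivial_map, norm_linHom_eq_zero, map_zero_left, LinearMap.zero_apply]

theorem inv_card_smul_norm_linHom_tprod_trivial_self [IsAlgClosed k] [CharZero k]
    [ρ.IsIrreducible] (ptr : (V ⊗[k] W →ₗ[k] V ⊗[k] W) →ₗ[k] (W →ₗ[k] W))
    (hptr : ∀ B C, ptr (map B C) = LinearMap.trace k V B • C) (S : V ⊗[k] W →ₗ[k] V ⊗[k] W) :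
    (Fintype.card G : k)⁻¹ • (linHom (ρ.tprod (trivial k G W)) (ρ.tprod (trivial k G W))).norm S
      = (finrank k V : k)⁻¹ • map LinearMap.id (ptr S) := by
  suffices (Fintype.card G : k)⁻¹ • (linHom (ρ.tprod (trivial k G W)) _).norm
      = (finrank k V : k)⁻¹ • LinearMap.lTensorHom V ∘ₗ ptr from LinearMap.congr_fun this S
  refine ext_map fun f h => ?_
  simp only [LinearMap.smul_apply, LinearMap.comp_apply, norm_linHom_tprod_trivial_map, hptr,
    map_smul]
  rw [← map_smul_left, inv_card_smul_norm_linHom_self, map_smul_left, map_smul_left]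
  rfl

end Field

end Representation

open Representation

theorem twirl_depolarizes_gauge_and_preserves_multiplicity_general
    {H : Type*} [NormedAddCommGroup H] [InnerProductSpace ℂ H]
    {G : Type*} [Group G] [Fintype G]
    {Q : Type*} [Fintype Q] [DecidableEq Q]
    (M N : Q → Type*)
    [∀ q, NormedAddCommGroup (M q)] [∀ q, InnerProductSpace ℂ (M q)]
    [∀ q, FiniteDimensional ℂ (M q)]
    [∀ q, NormedAddCommGroup (N q)] [∀ q, InnerProductSpace ℂ (N q)]
    [∀ q, FiniteDimensional ℂ (N q)]
    -- the unitary representation T of G on H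
    (T : G →* (H →ₗ[ℂ] H))
    -- the irreducible, pairwise non-isomorphic unitary representations T_q on M_q
    (Tq : ∀ q, G →* (M q →ₗ[ℂ] M q))
    (hTq_irreducible : ∀ q (W : Submodule ℂ (M q)),
      (∀ g, ∀ x ∈ W, Tq q g x ∈ W) → W = ⊥ ∨ W = ⊤)
    (hTq_pairwise_noniso : ∀ q q', q ≠ q' →
      ¬ ∃ e : M q ≃ₗ[ℂ] M q', ∀ g x, e (Tq q g x) = Tq q' g (e x))
    -- the unitary isomorphism Φ : H ≅ ⊕_q M_q ⊗ N_q intertwining T and ⊕_q T_q ⊗ I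
    (Φ : H ≃ₗ[ℂ] (∀ q, M q ⊗[ℂ] N q))
    (hΦ_equivariant : ∀ g (x : H) (q : Q),
      Φ (T g x) q = TensorProduct.map (Tq q g) LinearMap.id (Φ x q))
    -- the partial trace over M q : the unique linear map with Tr_M[B ⊗ C] = (Tr B)·C
    (ptr : ∀ q, ((M q ⊗[ℂ] N q) →ₗ[ℂ] (M q ⊗[ℂ] N q)) →ₗ[ℂ] ((N q) →ₗ[ℂ] (N q)))
    (hptr : ∀ q (B : M q →ₗ[ℂ] M q) (C : N q →ₗ[ℂ] N q),
      ptr q (TensorProduct.map B C) = (LinearMap.trace ℂ (M q) B) • C)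
    (A : H →ₗ[ℂ] H) :
    ∀ (v : ∀ q, M q ⊗[ℂ] N q) (q : Q),
      Φ ((((Fintype.card G : ℂ))⁻¹ • ∑ g : G, T g * A * T g⁻¹) (Φ.symm v)) q
        = ((Module.finrank ℂ (M q) : ℂ))⁻¹ •
            TensorProduct.map LinearMap.id
              (ptr q ((LinearMap.proj q : (∀ q', M q' ⊗[ℂ] N q') →ₗ[ℂ] (M q ⊗[ℂ] N q)) ∘ₗ
                (Φ.toLinearMap ∘ₗ A ∘ₗ Φ.symm.toLinearMap) ∘ₗ
                  LinearMap.single ℂ (fun q' => M q' ⊗[ℂ] N q') q))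
              (v q) := by
  intro v q
  rcases subsingleton_or_nontrivial (M q) with hMq | hMq
  · exact Subsingleton.elim _ _
  have hirr : ∀ q, Nontrivial (M q) → IsIrreducible (Tq q) := fun q _ =>
    isIrreducible_of_forall_submodule _ (hTq_irreducible q)
  have htwirl : ∑ g : G, T g * A * T g⁻¹ = (linHom T T).norm A := (norm_linHom_apply T T A).symm
  rw [htwirl, LinearMap.smul_apply, map_smul, Pi.smul_apply,
    norm_linHom_apply_eq_sum_blocks T (fun q => tprod (Tq q) (trivial ℂ G (N q))) Φ
      hΦ_equivariant, Finset.sum_eq_single q]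
  · have := hirr q hMq
    rw [← LinearMap.smul_apply, inv_card_smul_norm_linHom_tprod_trivial_self _ _ (hptr q),
      LinearMap.smul_apply]
  · intro q' _ hq'
    rcases subsingleton_or_nontrivial (M q') with hMq' | hMq'
    · rw [Subsingleton.elim (v q') 0, map_zero]
    have := hirr q hMq
    have := hirr q' hMq'
    have : IsEmpty (Representation.Equiv (Tq q') (Tq q)) :=
      ⟨fun e => hTq_pairwise_noniso q' q hq' ⟨e.toLinearEquiv, e.isIntertwining⟩⟩
    rw [norm_linHom_tprod_trivial_eq_zero, LinearMap.zero_apply]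
  · exact fun hq => absurd (Finset.mem_univ q) hq

theorem twirl_depolarizes_gauge_and_preserves_multiplicity
    {H : Type*} [NormedAddCommGroup H] [InnerProductSpace ℂ H] [FiniteDimensional ℂ H]
    {G : Type*} [Group G] [Fintype G]
    {Q : Type*} [Fintype Q] [DecidableEq Q]
    (M N : Q → Type*)
    [∀ q, NormedAddCommGroup (M q)] [∀ q, InnerProductSpace ℂ (M q)]
    [∀ q, FiniteDimensional ℂ (M q)]
    [∀ q, NormedAddCommGroup (N q)] [∀ q, InnerProductSpace ℂ (N q)]
    [∀ q, FiniteDimensional ℂ (N q)]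
    -- the inner product on M q ⊗ N q, sesquilinear with ⟪a⊗b, c⊗d⟫ = ⟪a,c⟫⟪b,d⟫
    (innerT : ∀ q, (M q ⊗[ℂ] N q) → (M q ⊗[ℂ] N q) → ℂ)
    (hinnerT_add_left : ∀ q (x x' y : M q ⊗[ℂ] N q),
      innerT q (x + x') y = innerT q x y + innerT q x' y)
    (hinnerT_add_right : ∀ q (x y y' : M q ⊗[ℂ] N q),
      innerT q x (y + y') = innerT q x y + innerT q x y')
    (hinnerT_tmul : ∀ q (a c : M q) (b d : N q),
      innerT q (a ⊗ₜ[ℂ] b) (c ⊗ₜ[ℂ] d) = (inner ℂ a c : ℂ) * (inner ℂ b d : ℂ))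
    -- the unitary representation T of G on H
    (T : G →* (H →ₗ[ℂ] H))
    (hT_unitary : ∀ g (x y : H), (inner ℂ (T g x) (T g y) : ℂ) = (inner ℂ x y : ℂ))
    -- the irreducible, pairwise non-isomorphic unitary representations T_q on M_q
    (Tq : ∀ q, G →* (M q →ₗ[ℂ] M q))
    (hTq_unitary : ∀ q g (x y : M q), (inner ℂ (Tq q g x) (Tq q g y) : ℂ) = (inner ℂ x y : ℂ))
    (hTq_irreducible : ∀ q (W : Submodule ℂ (M q)),
      (∀ g, ∀ x ∈ W, Tq q g x ∈ W) → W = ⊥ ∨ W = ⊤)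
    (hTq_pairwise_noniso : ∀ q q', q ≠ q' →
      ¬ ∃ e : M q ≃ₗ[ℂ] M q', ∀ g x, e (Tq q g x) = Tq q' g (e x))
    -- the unitary isomorphism Φ : H ≅ ⊕_q M_q ⊗ N_q intertwining T and ⊕_q T_q ⊗ I
    (Φ : H ≃ₗ[ℂ] (∀ q, M q ⊗[ℂ] N q))
    (hΦ_unitary : ∀ x y : H, (inner ℂ x y : ℂ) = ∑ q, innerT q (Φ x q) (Φ y q))
    (hΦ_equivariant : ∀ g (x : H) (q : Q),
      Φ (T g x) q = TensorProduct.map (Tq q g) LinearMap.id (Φ x q))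
    -- the partial trace over M q : the unique linear map with Tr_M[B ⊗ C] = (Tr B)·C
    (ptr : ∀ q, ((M q ⊗[ℂ] N q) →ₗ[ℂ] (M q ⊗[ℂ] N q)) →ₗ[ℂ] ((N q) →ₗ[ℂ] (N q)))
    (hptr : ∀ q (B : M q →ₗ[ℂ] M q) (C : N q →ₗ[ℂ] N q),
      ptr q (TensorProduct.map B C) = (LinearMap.trace ℂ (M q) B) • C)
    (A : H →ₗ[ℂ] H) :
    ∀ (v : ∀ q, M q ⊗[ℂ] N q) (q : Q),
      Φ ((((Fintype.card G : ℂ))⁻¹ • ∑ g : G, T g * A * T g⁻¹) (Φ.symm v)) q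
        = ((Module.finrank ℂ (M q) : ℂ))⁻¹ •
            TensorProduct.map LinearMap.id
              (ptr q ((LinearMap.proj q : (∀ q', M q' ⊗[ℂ] N q') →ₗ[ℂ] (M q ⊗[ℂ] N q)) ∘ₗ
                (Φ.toLinearMap ∘ₗ A ∘ₗ Φ.symm.toLinearMap) ∘ₗ
                  LinearMap.single ℂ (fun q' => M q' ⊗[ℂ] N q') q))
              (v q) :=
  twirl_depolarizes_gauge_and_preserves_multiplicity_general M N T Tq hTq_irreducible
    hTq_pairwise_noniso Φ hΦ_equivariant ptr hptr A
end

section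
/- Twirling two qubits over SU(2) decoheres the singlet–triplet coherence and depolarizes the triplet block: for every linear operator ρ on ℂ²⊗ℂ², ∫_{SU(2)} (U⊗U) ρ (U⊗U)† dU = Tr(Π₁ ρ)·(Π₁/3) + Tr(Π₀ ρ)·Π₀. -/
/-!
STATEMENT 7: Twirling two qubits over SU(2) decoheres the singlet–triplet coherence
and depolarizes the triplet block: for every linear operator ρ on ℂ²⊗ℂ²,
∫_{SU(2)} (U⊗U) ρ (U⊗U)† dU = Tr(Π₁ ρ)·(Π₁/3) + Tr(Π₀ ρ)·Π₀,
where Π₀ = |ψ⁻⟩⟨ψ⁻| is the projector onto the singlet and Π₁ = I − Π₀.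
The two-qubit space ℂ²⊗ℂ² is realized as ℂ^(Fin 2 × Fin 2), with U⊗U the
Kronecker product.
-/

open MeasureTheory Kronecker

attribute [local instance] Matrix.normedAddCommGroup Matrix.normedSpace

noncomputable instance : MeasurableSpace (Matrix (Fin 2) (Fin 2) ℂ) :=
  inferInstanceAs (MeasurableSpace (Fin 2 → Fin 2 → ℂ))

/-- The group structure on SU(2) (inverse given by the conjugate transpose). -/
noncomputable instance : Group ↥(Matrix.specialUnitaryGroup (Fin 2) ℂ) :=
  { (inferInstance : Monoid ↥(Matrix.specialUnitaryGroup (Fin 2) ℂ)) with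
    inv := fun U => ⟨star (U : Matrix (Fin 2) (Fin 2) ℂ), by
      obtain ⟨hu, hdet⟩ := U.2
      simp only [SetLike.mem_coe, MonoidHom.mem_mker] at hdet
      have hdet' : Matrix.det (U : Matrix (Fin 2) (Fin 2) ℂ) = 1 := hdet
      refine Submonoid.mem_inf.mpr ⟨Unitary.star_mem hu, ?_⟩
      show Matrix.detMonoidHom _ = 1
      show Matrix.det (star (U : Matrix (Fin 2) (Fin 2) ℂ)) = 1
      rw [Matrix.star_eq_conjTranspose, Matrix.det_conjTranspose, hdet', star_one]⟩
    inv_mul_cancel := fun U => by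
      ext1
      exact U.2.1.1 }

/-- The singlet state |ψ⁻⟩ = (|0⟩⊗|1⟩ − |1⟩⊗|0⟩)/√2 of two qubits. -/
noncomputable def singletVec : Fin 2 × Fin 2 → ℂ := fun p =>
  ((if p = (0, 1) then (1 : ℂ) else 0) - (if p = (1, 0) then (1 : ℂ) else 0))
    / (Real.sqrt 2 : ℂ)

/-- Π₀ = |ψ⁻⟩⟨ψ⁻|, the projector onto the singlet. -/
noncomputable def singletProj : Matrix (Fin 2 × Fin 2) (Fin 2 × Fin 2) ℂ :=
  Matrix.vecMulVec singletVec (star singletVec)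

/-- Π₁ = I − Π₀, the projector onto the triplet (symmetric) subspace. -/
noncomputable def tripletProj : Matrix (Fin 2 × Fin 2) (Fin 2 × Fin 2) ℂ :=
  1 - singletProj


/-!
The twirl `B` of `ρ` commutes with every `U ⊗ U`, by left invariance of Haar measure. Commuting
with `U ⊗ U` for just two well-chosen `U` already forces `B` into `span {1, SWAP}`, which is
`span {Π₀, Π₁}`. Since `Π₀` and `Π₁` also commute with every `U ⊗ U`, twirling preserves
`tr (Π₀ ρ)` and `tr (Π₁ ρ)`, and these read off the two coefficients because `tr Π₀ = 1` and
`tr Π₁ = 3`.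
-/

open Matrix Complex

section MatrixTopology

variable {m n R : Type*} [TopologicalSpace R]

/- Mathlib gives `Matrix` the product topology but registers neither of the next two instances for
it. The third is missing because the norm of `Matrix.normedAddCommGroup` induces that topology only
up to unfolding, beyond the reach of instance search. -/

instance [Finite m] [Finite n] [TopologicalSpace.PseudoMetrizableSpace R] :
    TopologicalSpace.PseudoMetrizableSpace (Matrix m n R) :=
  inferInstanceAs (TopologicalSpace.PseudoMetrizableSpace (m → n → R))

instance [Countable m] [Countable n] [SecondCountableTopology R] :
    SecondCountableTopology (Matrix m n R) :=
  inferInstanceAs (SecondCountableTopology (m → n → R))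

noncomputable instance {𝕜 : Type*} [RCLike 𝕜] [Fintype m] [Fintype n] :
    ContinuousENorm (Matrix m n 𝕜) :=
  SeminormedAddGroup.toContinuousENorm

end MatrixTopology

section Twirl

variable {𝕜 n : Type*} [RCLike 𝕜] [Fintype n]

section Integral

variable {α : Type*} [MeasurableSpace α] {μ : Measure α}

theorem integral_const_mul_mul_const {f : α → Matrix n n 𝕜} (hf : Integrable f μ)
    (P Q : Matrix n n 𝕜) : ∫ x, P * f x * Q ∂μ = P * (∫ x, f x ∂μ) * Q :=
  (LinearMap.mulRight 𝕜 Q ∘ₗ LinearMap.mulLeft 𝕜 P).toContinuousLinearMap.integral_comp_comm hf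

theorem integral_trace_const_mul {f : α → Matrix n n 𝕜} (hf : Integrable f μ)
    (P : Matrix n n 𝕜) : ∫ x, trace (P * f x) ∂μ = trace (P * ∫ x, f x ∂μ) :=
  (traceLinearMap n 𝕜 𝕜 ∘ₗ LinearMap.mulLeft 𝕜 P).toContinuousLinearMap.integral_comp_comm hf

variable [DecidableEq n]

theorem isCompact_unitaryGroup : IsCompact (unitaryGroup n 𝕜 : Set (Matrix n n 𝕜)) := by
  refine Metric.isCompact_of_isClosed_isBounded (isClosed_unitary (R := Matrix n n 𝕜)) ?_
  refine (Metric.isBounded_iff_subset_closedBall 0).2 ⟨1, fun U hU => ?_⟩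
  rw [mem_closedBall_zero_iff, norm_le_iff zero_le_one]
  exact fun i j => entry_norm_bound_of_unitary hU i j

theorem integrable_conj_of_mem_unitaryGroup [IsFiniteMeasure μ] {U : α → Matrix n n 𝕜}
    (hU : AEStronglyMeasurable U μ) (hUu : ∀ x, U x ∈ unitaryGroup n 𝕜) (ρ : Matrix n n 𝕜) :
    Integrable (fun x => U x * ρ * star (U x)) μ := by
  have hconj : Continuous fun V : Matrix n n 𝕜 => V * ρ * star V := by fun_prop
  obtain ⟨C, hC⟩ := isCompact_unitaryGroup.exists_bound_of_continuousOn hconj.continuousOn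
  exact .of_bound (hconj.comp_aestronglyMeasurable hU) C (.of_forall fun x => hC _ (hUu x))

end Integral

variable [DecidableEq n] {G : Type*} [Group G] [MeasurableSpace G] (μ : Measure G)
  (π : G →* Matrix n n 𝕜)

noncomputable def twirl (ρ : Matrix n n 𝕜) : Matrix n n 𝕜 :=
  ∫ g, π g * ρ * star (π g) ∂μ

variable {μ π}

theorem mul_twirl_mul_star [MeasurableMul G] [μ.IsMulLeftInvariant] {ρ : Matrix n n 𝕜}
    (hint : Integrable (fun g => π g * ρ * star (π g)) μ) (h : G) :
    π h * twirl μ π ρ * star (π h) = twirl μ π ρ := by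
  rw [twirl, ← integral_const_mul_mul_const hint]
  simpa only [map_mul, star_mul, Matrix.mul_assoc] using
    integral_mul_left_eq_self (fun g => π g * ρ * star (π g)) h

theorem commute_twirl [MeasurableMul G] [μ.IsMulLeftInvariant]
    (hπ : ∀ g, π g ∈ unitaryGroup n 𝕜) {ρ : Matrix n n 𝕜}
    (hint : Integrable (fun g => π g * ρ * star (π g)) μ) (h : G) :
    Commute (π h) (twirl μ π ρ) :=
  calc π h * twirl μ π ρ = π h * twirl μ π ρ * (star (π h) * π h) := by
        rw [(hπ h).1, Matrix.mul_one]
    _ = twirl μ π ρ * π h := by rw [← Matrix.mul_assoc, mul_twirl_mul_star hint]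

theorem trace_mul_twirl [IsProbabilityMeasure μ] (hπ : ∀ g, π g ∈ unitaryGroup n 𝕜)
    {ρ : Matrix n n 𝕜} (hint : Integrable (fun g => π g * ρ * star (π g)) μ)
    {P : Matrix n n 𝕜} (hP : ∀ g, Commute P (π g)) : trace (P * twirl μ π ρ) = trace (P * ρ) := by
  have hconst g : trace (P * (π g * ρ * star (π g))) = trace (P * ρ) := by
    rw [← Matrix.mul_assoc, ← Matrix.mul_assoc, (hP g).eq, Matrix.mul_assoc _ P,
      Matrix.mul_assoc, trace_mul_comm, Matrix.mul_assoc, (hπ g).1, Matrix.mul_one]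
  rw [twirl, ← integral_trace_const_mul hint]
  simp [hconst]

end Twirl

def tensorSquare (R m : Type*) [CommSemiring R] [Fintype m] [DecidableEq m] :
    Matrix m m R →* Matrix (m × m) (m × m) R where
  toFun U := U ⊗ₖ U
  map_one' := one_kronecker_one
  map_mul' A B := mul_kronecker_mul A B A B

section Swap

def swapMatrix (R n : Type*) [Zero R] [One R] [DecidableEq n] : Matrix (n × n) (n × n) R :=
  of fun p q => if p.swap = q then 1 else 0

variable {R n : Type*} [CommSemiring R] [Fintype n] [DecidableEq n]

theorem swapMatrix_mul_apply (M : Matrix (n × n) (n × n) R) (p q : n × n) :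
    (swapMatrix R n * M) p q = M p.swap q := by
  simp [swapMatrix, mul_apply]

theorem mul_swapMatrix_apply (M : Matrix (n × n) (n × n) R) (p q : n × n) :
    (M * swapMatrix R n) p q = M p q.swap := by
  simp [swapMatrix, mul_apply, Prod.swap_eq_iff_eq_swap]

theorem commute_swapMatrix_kronecker_self (A : Matrix n n R) :
    Commute (swapMatrix R n) (A ⊗ₖ A) := by
  ext p q
  simp [swapMatrix_mul_apply, mul_swapMatrix_apply, mul_comm]

theorem swapMatrix_mul_self : swapMatrix R n * swapMatrix R n = 1 := by
  ext p q
  rw [swapMatrix_mul_apply]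
  simp [swapMatrix, one_apply]

theorem trace_swapMatrix : trace (swapMatrix R n) = Fintype.card n := by
  rw [trace, Fintype.sum_prod_type]
  simp [swapMatrix, Prod.swap, eq_comm]

end Swap

theorem singletProj_eq : singletProj = (2⁻¹ : ℂ) • (1 - swapMatrix ℂ (Fin 2)) := by
  have h2 : (Real.sqrt 2 : ℂ)⁻¹ * (Real.sqrt 2 : ℂ)⁻¹ = 2⁻¹ := by
    rw [← mul_inv, ← ofReal_mul, Real.mul_self_sqrt zero_le_two, ofReal_ofNat]
  ext ⟨a, b⟩ ⟨c, d⟩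
  fin_cases a <;> fin_cases b <;> fin_cases c <;> fin_cases d <;>
    simp [singletProj, singletVec, vecMulVec_apply, swapMatrix, one_apply, conj_ofReal,
      div_eq_mul_inv, h2]

theorem tripletProj_eq : tripletProj = (2⁻¹ : ℂ) • (1 + swapMatrix ℂ (Fin 2)) := by
  rw [tripletProj, singletProj_eq]
  module

theorem commute_singletProj_kronecker_self (A : Matrix (Fin 2) (Fin 2) ℂ) :
    Commute singletProj (A ⊗ₖ A) := by
  rw [singletProj_eq]
  exact ((Commute.one_left _).sub_left (commute_swapMatrix_kronecker_self A)).smul_left _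

theorem commute_tripletProj_kronecker_self (A : Matrix (Fin 2) (Fin 2) ℂ) :
    Commute tripletProj (A ⊗ₖ A) := by
  rw [tripletProj_eq]
  exact ((Commute.one_left _).add_left (commute_swapMatrix_kronecker_self A)).smul_left _

theorem eq_trace_tripletProj_smul_add_trace_singletProj_smul
    {B : Matrix (Fin 2 × Fin 2) (Fin 2 × Fin 2) ℂ} {a b : ℂ}
    (hB : B = a • 1 + b • swapMatrix ℂ (Fin 2)) :
    B = (trace (tripletProj * B) / 3) • tripletProj + trace (singletProj * B) • singletProj := by
  subst hB
  simp only [tripletProj_eq, singletProj_eq, smul_mul_assoc, add_mul, sub_mul, mul_add,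
    mul_smul_comm, swapMatrix_mul_self, Matrix.one_mul, Matrix.mul_one, trace_add, trace_sub,
    trace_smul, trace_one, trace_swapMatrix, Fintype.card_prod, Fintype.card_fin, smul_eq_mul]
  push_cast
  module

noncomputable def iPauliZ : Matrix (Fin 2) (Fin 2) ℂ := !![I, 0; 0, -I]

/-- Rotation by `2π/3` about the axis `(1, 1, 1)`: it cycles the Pauli axes `x → z → y`. -/
noncomputable def pauliCycle : Matrix (Fin 2) (Fin 2) ℂ :=
  !![(1 + I) / 2, (1 + I) / 2; (-1 + I) / 2, (1 - I) / 2]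

theorem iPauliZ_mem_specialUnitaryGroup : iPauliZ ∈ specialUnitaryGroup (Fin 2) ℂ := by
  refine mem_specialUnitaryGroup_iff.2 ⟨mem_unitaryGroup_iff.2 ?_, ?_⟩
  · ext i j
    fin_cases i <;> fin_cases j <;> simp [iPauliZ, mul_apply, star_apply]
  · simp [iPauliZ, det_fin_two]

theorem pauliCycle_mem_specialUnitaryGroup : pauliCycle ∈ specialUnitaryGroup (Fin 2) ℂ := by
  refine mem_specialUnitaryGroup_iff.2 ⟨mem_unitaryGroup_iff.2 ?_, ?_⟩
  · ext i j
    fin_cases i <;> fin_cases j <;>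
      simp [pauliCycle, mul_apply, star_apply, map_div₀, map_ofNat] <;> grind [I_sq]
  · simp [pauliCycle, det_fin_two]
    grind [I_sq]

/-- `iPauliZ` and `pauliCycle` generate the binary tetrahedral group, which acts irreducibly on the
triplet. -/
theorem eq_smul_one_add_smul_swapMatrix_of_commute
    (B : Matrix (Fin 2 × Fin 2) (Fin 2 × Fin 2) ℂ)
    (hZ : Commute (iPauliZ ⊗ₖ iPauliZ) B) (hR : Commute (pauliCycle ⊗ₖ pauliCycle) B) :
    B = B (0, 1) (0, 1) • 1 + B (0, 1) (1, 0) • swapMatrix ℂ (Fin 2) := by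
  have eZ := fun p q => congrFun (congrFun hZ.eq p) q
  have eR := fun p q => congrFun (congrFun hR.eq p) q
  simp [iPauliZ, pauliCycle, mul_apply, Fintype.sum_prod_type, Fin.sum_univ_two, Prod.forall,
    Fin.forall_fin_two] at eZ eR
  ring_nf at eR
  simp only [I_sq] at eR
  ext ⟨a, b⟩ ⟨c, d⟩
  fin_cases a <;> fin_cases b <;> fin_cases c <;> fin_cases d <;>
    simp [swapMatrix, one_apply] <;> grind [I_sq]

theorem su2_twirl_two_qubits
    [BorelSpace ↥(Matrix.specialUnitaryGroup (Fin 2) ℂ)]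
    (μ : Measure ↥(Matrix.specialUnitaryGroup (Fin 2) ℂ))
    [μ.IsHaarMeasure] [IsProbabilityMeasure μ]
    (ρ : Matrix (Fin 2 × Fin 2) (Fin 2 × Fin 2) ℂ) :
    (∫ U, ((U : Matrix (Fin 2) (Fin 2) ℂ) ⊗ₖ (U : Matrix (Fin 2) (Fin 2) ℂ)) * ρ *
        star ((U : Matrix (Fin 2) (Fin 2) ℂ) ⊗ₖ (U : Matrix (Fin 2) (Fin 2) ℂ)) ∂μ)
      = (Matrix.trace (tripletProj * ρ) / 3) • tripletProj
        + Matrix.trace (singletProj * ρ) • singletProj := by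
  set π := (tensorSquare ℂ (Fin 2)).comp (specialUnitaryGroup (Fin 2) ℂ).subtype
  have hπ (U : specialUnitaryGroup (Fin 2) ℂ) : π U ∈ unitaryGroup (Fin 2 × Fin 2) ℂ :=
    kronecker_mem_unitary U.2.1 U.2.1
  have hπ_cont : Continuous π := continuous_matrix fun p q =>
    (continuous_subtype_val.matrix_elem _ _).mul (continuous_subtype_val.matrix_elem _ _)
  have hint := integrable_conj_of_mem_unitaryGroup (μ := μ) hπ_cont.aestronglyMeasurable hπ ρ
  change twirl μ π ρ = _
  have hspan := eq_smul_one_add_smul_swapMatrix_of_commute (twirl μ π ρ)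
    (commute_twirl hπ hint ⟨iPauliZ, iPauliZ_mem_specialUnitaryGroup⟩)
    (commute_twirl hπ hint ⟨pauliCycle, pauliCycle_mem_specialUnitaryGroup⟩)
  rw [eq_trace_tripletProj_smul_add_trace_singletProj_smul hspan,
    trace_mul_twirl hπ hint fun U => commute_tripletProj_kronecker_self U,
    trace_mul_twirl hπ hint fun U => commute_singletProj_kronecker_self U]
end

section
/- The invariant representation reproduces all quantum statistics: for all d×d complex matrices ρ and E, (1/|G|)·Tr[$(ρ)·$(E)] = Tr[ρ·E], where the trace on the left is over ℓ²(G) ⊗ ℂ^d. Hence with ρ^inv = $(ρ)/|G| and E^inv = $(E), one has Tr[ρ^inv E^inv] = Tr[ρE], so a superselection rule for G imposes no fundamental restriction on achievable measurement statistics. -/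
/-!
STATEMENT 17: The invariant representation reproduces all quantum statistics: for all
d×d complex matrices ρ and E, (1/|G|)·Tr[$(ρ)·$(E)] = Tr[ρ·E].  Hence with
ρ^inv = $(ρ)/|G| and E^inv = $(E), one has Tr[ρ^inv E^inv] = Tr[ρE].
-/

open Kronecker

/-- The map $(A) = ∑_{g∈G} |g⟩⟨g| ⊗ U(g) A U(g)† on ℓ²(G) ⊗ ℂ^d. -/
noncomputable def dollar {G : Type*} [Fintype G] [DecidableEq G] [Group G] (d : ℕ)
    (U : G →* ↥(Matrix.unitaryGroup (Fin d) ℂ)) (A : Matrix (Fin d) (Fin d) ℂ) :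
    Matrix (G × Fin d) (G × Fin d) ℂ :=
  ∑ g : G, (Matrix.single g g (1 : ℂ)) ⊗ₖ
    ((U g : Matrix (Fin d) (Fin d) ℂ) * A * star (U g : Matrix (Fin d) (Fin d) ℂ))

/-!
Conjugation by a unitary preserves the trace of a product, so each of the `|G|` diagonal blocks
of `$(ρ) $(E)` has trace `Tr[ρ E]`; the blocks `|g⟩⟨g|` with `g ≠ h` annihilate each other, so
no cross terms survive.
-/

namespace Matrix

theorem trace_unitary_conj_mul_unitary_conj {n R : Type*} [Fintype n] [DecidableEq n]
    [CommRing R] [StarRing R] {u : Matrix n n R} (hu : u ∈ unitary (Matrix n n R))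
    (A B : Matrix n n R) :
    trace (u * A * star u * (u * B * star u)) = trace (A * B) :=
  calc trace (u * A * star u * (u * B * star u))
      = trace (u * (A * (star u * u) * B) * star u) := by simp only [Matrix.mul_assoc]
    _ = trace (u * (A * B) * star u) := by rw [Unitary.star_mul_self_of_mem hu, Matrix.mul_one]
    _ = trace (A * B) := by
        rw [trace_mul_cycle, Unitary.star_mul_self_of_mem hu, Matrix.one_mul]

variable {ι n R : Type*} [Fintype ι] [DecidableEq ι] [Fintype n] [CommSemiring R]

theorem trace_single_kronecker_mul_single_kronecker (i j : ι) (A B : Matrix n n R) :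
    trace ((single i i (1 : R) ⊗ₖ A) * (single j j 1 ⊗ₖ B)) =
      if i = j then trace (A * B) else 0 := by
  rw [← mul_kronecker_mul, trace_kronecker]
  split_ifs with h
  · subst h
    simp
  · simp [h]

theorem trace_sum_single_kronecker_mul_sum_single_kronecker (A B : ι → Matrix n n R) :
    trace ((∑ i, single i i (1 : R) ⊗ₖ A i) * ∑ j, single j j 1 ⊗ₖ B j) =
      ∑ i, trace (A i * B i) := by
  simp only [Finset.sum_mul_sum, trace_sum, trace_single_kronecker_mul_single_kronecker,
    Finset.sum_ite_eq, Finset.mem_univ, if_true]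

end Matrix

theorem trace_dollar_mul_dollar {G : Type*} [Fintype G] [DecidableEq G] [Group G] (d : ℕ)
    (U : G →* ↥(Matrix.unitaryGroup (Fin d) ℂ)) (ρ E : Matrix (Fin d) (Fin d) ℂ) :
    Matrix.trace (dollar d U ρ * dollar d U E) = Fintype.card G * Matrix.trace (ρ * E) := by
  simp [dollar, Matrix.trace_sum_single_kronecker_mul_sum_single_kronecker,
    Matrix.trace_unitary_conj_mul_unitary_conj (U _).2]

theorem dollar_reproduces_born_rule
    {G : Type*} [Fintype G] [DecidableEq G] [Group G] (d : ℕ)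
    (U : G →* ↥(Matrix.unitaryGroup (Fin d) ℂ))
    (ρ E : Matrix (Fin d) (Fin d) ℂ) :
    ((Fintype.card G : ℂ))⁻¹ * Matrix.trace (dollar d U ρ * dollar d U E)
        = Matrix.trace (ρ * E)
    ∧ Matrix.trace ((((Fintype.card G : ℂ))⁻¹ • dollar d U ρ) * dollar d U E)
        = Matrix.trace (ρ * E) := by
  have hcard : (Fintype.card G : ℂ) ≠ 0 := Nat.cast_ne_zero.mpr Fintype.card_ne_zero
  have averaged : ((Fintype.card G : ℂ))⁻¹ * Matrix.trace (dollar d U ρ * dollar d U E)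
      = Matrix.trace (ρ * E) := by
    rw [trace_dollar_mul_dollar, inv_mul_cancel_left₀ hcard]
  exact ⟨averaged, by rwa [Matrix.smul_mul, Matrix.trace_smul, smul_eq_mul]⟩
end

section
/- The average fidelity of the antiparallel-spin direction-alignment protocol equals (1+√3)/(2√3), and this strictly exceeds the parallel-spin value: (1/2) ∫₀^π sin β · ((1+√3·cos β)²/2) · cos²(β/2) dβ = (1+√3)/(2√3), and (1+√3)/(2√3) > 3/4. -/
open Real intervalIntegral

/-!
STATEMENT 19: The average fidelity of the antiparallel-spin direction-alignment
protocol equals (1+√3)/(2√3), and this strictly exceeds the parallel-spin value 3/4: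
(1/2) ∫₀^π sin β · ((1+√3·cos β)²/2) · cos²(β/2) dβ = (1+√3)/(2√3) > 3/4.
-/

theorem antiparallel_spins_average_fidelity :
    ((1 / 2 : ℝ) * ∫ β in (0 : ℝ)..Real.pi,
        Real.sin β * ((1 + Real.sqrt 3 * Real.cos β) ^ 2 / 2) * Real.cos (β / 2) ^ 2
      = (1 + Real.sqrt 3) / (2 * Real.sqrt 3))
    ∧ (1 + Real.sqrt 3) / (2 * Real.sqrt 3) > 3 / 4 := by
  have s3 : Real.sqrt 3 ^ 2 = 3 := Real.sq_sqrt (by norm_num)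
  have s3pos : (0:ℝ) < Real.sqrt 3 := Real.sqrt_pos.mpr (by norm_num)
  have s3gt : (1.7:ℝ) < Real.sqrt 3 := by
    nlinarith [s3, s3pos]
  set s := Real.sqrt 3 with hs
  constructor
  · have key : (∫ β in (0:ℝ)..Real.pi,
        Real.sin β * ((1 + s * Real.cos β) ^ 2 / 2) * Real.cos (β / 2) ^ 2)
        = 1 + s/3 := by
      have hF : ∀ x : ℝ, HasDerivAt
          (fun β : ℝ => -(Real.cos β + (1+2*s)/2 * Real.cos β^2
            + (2*s/3+1) * Real.cos β^3 + 3/4 * Real.cos β^4)/4)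
          (Real.sin x * ((1 + s * Real.cos x) ^ 2 / 2) * Real.cos (x / 2) ^ 2) x := by
        intro x
        have hc := Real.hasDerivAt_cos x
        have h : HasDerivAt (fun β : ℝ => -(Real.cos β + (1+2*s)/2 * Real.cos β^2
            + (2*s/3+1) * Real.cos β^3 + 3/4 * Real.cos β^4)/4)
            (-((-Real.sin x) + (1+2*s)/2 * (2 * Real.cos x ^ 1 * (-Real.sin x))
              + (2*s/3+1) * (3 * Real.cos x ^ 2 * (-Real.sin x))
              + 3/4 * (4 * Real.cos x ^ 3 * (-Real.sin x)))/4) x := by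
          exact (((hc.add (((hc.pow 2).const_mul ((1+2*s)/2)))).add
            ((hc.pow 3).const_mul (2*s/3+1))).add
            ((hc.pow 4).const_mul (3/4))).neg.div_const 4
        convert h using 1
        have hhalf : Real.cos (x/2) ^ 2 = (1 + Real.cos x) / 2 := by
          rw [Real.cos_sq]; rw [show 2*(x/2) = x by ring]; ring
        rw [hhalf]
        linear_combination (Real.sin x * (Real.cos x ^ 2 + Real.cos x ^ 3) / 4) * s3
      rw [intervalIntegral.integral_eq_sub_of_hasDerivAt (fun x _ => hF x)
        (by apply Continuous.intervalIntegrable; fun_prop)]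
      simp [Real.cos_pi]
      ring
    rw [key]
    field_simp
    nlinarith [s3]
  · rw [gt_iff_lt, div_lt_div_iff₀ (by norm_num) (by positivity)]
    nlinarith [s3gt]
end
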